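/- arXiv:2603.06574 — 7 statements merged into one kernel-verified Lean document; each statement's English description precedes it below -/
import Mathlib

section
/- Let k : (0,∞) → [0,∞) be a measurable function satisfying k(t) ≤ C t^{η-1} for all t ∈ (0,1), for some constants C > 0 and η ∈ (0,1). Define h₀ ≡ 1 and, inductively, h_n(t) := ∫₀^t h_{n-1}(t-s) k(s) ds for n ≥ 1. Then for all t ∈ (0,1) and all n ≥ 0, h_n(t) ≤ (C Γ(η))^n t^{nη} / Γ(nη + 1). -/
open MeasureTheory intervalIntegral

lemma realBeta (a b : ℝ) (ha : 0 < a) (hb : 0 < b) :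
    ∫ x in (0:ℝ)..1, x ^ (a - 1) * (1 - x) ^ (b - 1) =
      Real.Gamma a * Real.Gamma b / Real.Gamma (a + b) := by
  have hab : Real.Gamma (a + b) ≠ 0 := (Real.Gamma_pos_of_pos (by linarith)).ne'
  have key := Complex.Gamma_mul_Gamma_eq_betaIntegral (s := (a : ℂ)) (t := (b : ℂ))
    (by simpa using ha) (by simpa using hb)
  have hbeta : Complex.betaIntegral (a : ℂ) (b : ℂ) =
      ((∫ x in (0:ℝ)..1, x ^ (a - 1) * (1 - x) ^ (b - 1) : ℝ) : ℂ) := by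
    rw [Complex.betaIntegral, ← intervalIntegral.integral_ofReal]
    refine intervalIntegral.integral_congr fun x hx => ?_
    rw [Set.uIcc_of_le zero_le_one] at hx
    rw [Complex.ofReal_mul, Complex.ofReal_cpow hx.1, Complex.ofReal_cpow (by linarith [hx.2] : (0:ℝ) ≤ 1 - x)]
    push_cast
    ring
  rw [hbeta, Complex.Gamma_ofReal, Complex.Gamma_ofReal, ← Complex.ofReal_add,
    Complex.Gamma_ofReal, ← Complex.ofReal_mul, ← Complex.ofReal_mul] at key
  have := Complex.ofReal_injective key
  field_simp at this ⊢
  linarith [this]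

lemma convPow {t a η : ℝ} (ht : 0 < t) (ha : 0 ≤ a) (hη : 0 < η) :
    ∫ s in (0:ℝ)..t, (t - s) ^ a * s ^ (η - 1) =
      t ^ (a + η) * (Real.Gamma η * Real.Gamma (a + 1) / Real.Gamma (a + η + 1)) := by
  have h1 : (t • ∫ x in (0:ℝ)..1, (t - t * x) ^ a * (t * x) ^ (η - 1))
      = ∫ s in (0:ℝ)..t, (t - s) ^ a * s ^ (η - 1) := by
    simpa using intervalIntegral.smul_integral_comp_mul_left
      (fun s => (t - s) ^ a * s ^ (η - 1)) t (a := 0) (b := 1)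
  rw [← h1]
  have h2 : (∫ x in (0:ℝ)..1, (t - t * x) ^ a * (t * x) ^ (η - 1))
      = ∫ x in (0:ℝ)..1, (t ^ a * t ^ (η - 1)) * (x ^ (η - 1) * (1 - x) ^ a) := by
    refine intervalIntegral.integral_congr fun x hx => ?_
    rw [Set.uIcc_of_le zero_le_one] at hx
    have hx0 : 0 ≤ x := hx.1
    have hx1 : 0 ≤ 1 - x := by linarith [hx.2]
    have e1 : t - t * x = t * (1 - x) := by ring
    rw [e1, Real.mul_rpow ht.le hx1, Real.mul_rpow ht.le hx0]
    ring
  have hb := realBeta η (a + 1) hη (by linarith)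
  rw [show a + 1 - 1 = a from by ring, show η + (a + 1) = a + η + 1 from by ring] at hb
  rw [h2, intervalIntegral.integral_const_mul, hb]
  have e2 : t * (t ^ a * t ^ (η - 1)) = t ^ (a + η) := by
    rw [Real.rpow_sub ht, Real.rpow_add ht, Real.rpow_one]
    field_simp
  rw [smul_eq_mul, ← e2]
  ring

/-- If `k(t) ≤ C t^{η-1}` on `(0,1)`, the iterated convolutions `h_n` satisfy
`h_n(t) ≤ (C Γ(η))^n t^{nη} / Γ(nη+1)` on `(0,1)`. -/
theorem hn_upper_bound (k : ℝ → ℝ) (C η : ℝ) (hC : 0 < C) (hη : η ∈ Set.Ioo (0:ℝ) 1)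
    (hkm : Measurable k) (hk0 : ∀ t > 0, 0 ≤ k t)
    (hkb : ∀ t ∈ Set.Ioo (0:ℝ) 1, k t ≤ C * t ^ (η - 1))
    (h : ℕ → ℝ → ℝ) (h0 : ∀ t, h 0 t = 1)
    (hrec : ∀ n t, h (n+1) t = ∫ s in (0:ℝ)..t, h n (t - s) * k s) :
    ∀ n : ℕ, ∀ t ∈ Set.Ioo (0:ℝ) 1,
      h n t ≤ (C * Real.Gamma η) ^ n * t ^ ((n:ℝ) * η) / Real.Gamma ((n:ℝ) * η + 1) := by
  intro n
  induction n with
  | zero =>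
    intro t ht
    simp [h0, Real.Gamma_one]
  | succ n ih =>
    intro t ht
    obtain ⟨ht0, ht1⟩ := ht
    have hη0 := hη.1
    have hη1 := hη.2
    set a : ℝ := (n : ℝ) * η with ha_def
    have ha : 0 ≤ a := mul_nonneg (Nat.cast_nonneg n) hη0.le
    have hΓη : 0 < Real.Gamma η := Real.Gamma_pos_of_pos hη0
    have hΓa1 : 0 < Real.Gamma (a + 1) := Real.Gamma_pos_of_pos (by linarith)
    have hΓae : 0 < Real.Gamma (a + η + 1) := Real.Gamma_pos_of_pos (by linarith)
    set Bn : ℝ := (C * Real.Gamma η) ^ n / Real.Gamma (a + 1) with hBn_def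
    have hBn : 0 ≤ Bn := div_nonneg (pow_nonneg (by positivity) n) hΓa1.le
    have hcast : ((n + 1 : ℕ) : ℝ) * η = a + η := by push_cast; ring
    rw [hrec, hcast]
    by_cases hf : IntervalIntegrable (fun s => h n (t - s) * k s) volume 0 t
    · have hbase : IntervalIntegrable (fun s => (t - s) ^ a * s ^ (η - 1)) volume 0 t := by
        refine (intervalIntegral.intervalIntegrable_rpow'
          (show (-1:ℝ) < η - 1 by linarith)).mono_fun ?_ ?_
        · exact (show Measurable fun s : ℝ => (t - s) ^ a * s ^ (η - 1) by
            fun_prop).aestronglyMeasurable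
        · filter_upwards [ae_restrict_mem measurableSet_uIoc] with s hs
          rw [Set.uIoc_of_le ht0.le] at hs
          have hs0 : 0 < s := hs.1
          have hst : s ≤ t := hs.2
          have h1 : 0 ≤ t - s := by linarith
          have h2 : (t - s) ^ a ≤ 1 :=
            Real.rpow_le_one h1 (by linarith) ha
          have h3 : 0 < s ^ (η - 1) := Real.rpow_pos_of_pos hs0 _
          simp only [norm_mul, Real.norm_eq_abs]
          rw [abs_of_nonneg (Real.rpow_nonneg h1 a), abs_of_pos h3]
          nlinarith [Real.rpow_nonneg h1 a]
      have hgint : IntervalIntegrable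
          (fun s => Bn * (t - s) ^ a * (C * s ^ (η - 1))) volume 0 t := by
        have : (fun s => Bn * (t - s) ^ a * (C * s ^ (η - 1)))
            = fun s => (Bn * C) * ((t - s) ^ a * s ^ (η - 1)) := funext fun s => by ring
        rw [this]
        exact hbase.const_mul _
      have hne : ∀ᵐ s ∂(volume.restrict (Set.Icc (0:ℝ) t)), s ≠ t := by
        refine ae_restrict_of_ae ?_
        rw [ae_iff]
        have : {s : ℝ | ¬ s ≠ t} = {t} := by ext s; simp
        rw [this]
        exact measure_singleton t
      have hne0 : ∀ᵐ s ∂(volume.restrict (Set.Icc (0:ℝ) t)), s ≠ 0 := by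
        refine ae_restrict_of_ae ?_
        rw [ae_iff]
        have : {s : ℝ | ¬ s ≠ 0} = {0} := by ext s; simp
        rw [this]
        exact measure_singleton 0
      have hle : (fun s => h n (t - s) * k s)
          ≤ᵐ[volume.restrict (Set.Icc (0:ℝ) t)]
          fun s => Bn * (t - s) ^ a * (C * s ^ (η - 1)) := by
        filter_upwards [ae_restrict_mem measurableSet_Icc, hne, hne0] with s hs hst hs0
        have hs0' : 0 < s := lt_of_le_of_ne hs.1 (Ne.symm hs0)
        have hst' : s < t := lt_of_le_of_ne hs.2 hst
        have hts : t - s ∈ Set.Ioo (0:ℝ) 1 := ⟨by linarith, by linarith⟩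
        have hIH := ih (t - s) hts
        have hIH' : h n (t - s) ≤ Bn * (t - s) ^ a := by
          rw [hBn_def]
          calc h n (t - s) ≤ (C * Real.Gamma η) ^ n * (t - s) ^ a / Real.Gamma (a + 1) := hIH
            _ = (C * Real.Gamma η) ^ n / Real.Gamma (a + 1) * (t - s) ^ a := by ring
        have hks : 0 ≤ k s := hk0 s hs0'
        have hkbs : k s ≤ C * s ^ (η - 1) := hkb s ⟨hs0', by linarith⟩
        have hpos : 0 ≤ Bn * (t - s) ^ a :=
          mul_nonneg hBn (Real.rpow_nonneg (by linarith) a)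
        calc h n (t - s) * k s ≤ (Bn * (t - s) ^ a) * k s :=
              mul_le_mul_of_nonneg_right hIH' hks
          _ ≤ Bn * (t - s) ^ a * (C * s ^ (η - 1)) :=
              mul_le_mul_of_nonneg_left hkbs hpos
      have step1 := intervalIntegral.integral_mono_ae_restrict ht0.le hf hgint hle
      have step2 : (∫ s in (0:ℝ)..t, Bn * (t - s) ^ a * (C * s ^ (η - 1)))
          = (Bn * C) * (t ^ (a + η) *
            (Real.Gamma η * Real.Gamma (a + 1) / Real.Gamma (a + η + 1))) := by
        have e : (∫ s in (0:ℝ)..t, Bn * (t - s) ^ a * (C * s ^ (η - 1)))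
            = ∫ s in (0:ℝ)..t, (Bn * C) * ((t - s) ^ a * s ^ (η - 1)) :=
          intervalIntegral.integral_congr fun s _ => by ring
        rw [e, intervalIntegral.integral_const_mul, convPow ht0 ha hη0]
      have step3 : (Bn * C) * (t ^ (a + η) *
            (Real.Gamma η * Real.Gamma (a + 1) / Real.Gamma (a + η + 1)))
          = (C * Real.Gamma η) ^ (n + 1) * t ^ (a + η) / Real.Gamma (a + η + 1) := by
        rw [hBn_def, pow_succ]
        field_simp
      calc (∫ s in (0:ℝ)..t, h n (t - s) * k s)
          ≤ ∫ s in (0:ℝ)..t, Bn * (t - s) ^ a * (C * s ^ (η - 1)) := step1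
        _ = (C * Real.Gamma η) ^ (n + 1) * t ^ (a + η) / Real.Gamma (a + η + 1) := by
            rw [step2, step3]
    · rw [intervalIntegral.integral_undef hf]
      exact div_nonneg (mul_nonneg (pow_nonneg (by positivity) _)
        (Real.rpow_nonneg ht0.le _)) hΓae.le
end

section
/- Let k : (0,∞) → [0,∞) satisfy k(t) ≤ C t^{η-1} on (0,1) for constants C > 0 and η ∈ (0,1), and define h_n by h₀ ≡ 1, h_n(t) = ∫₀^t h_{n-1}(t-s) k(s) ds. Then for all n ≥ 1 and t ∈ (0,1), h_n(t) ≤ (C Γ(η))^{n-1} t^{(n-1)η} h₁(t) / Γ((n-1)η + 1). -/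
open MeasureTheory intervalIntegral

lemma real_beta {a b : ℝ} (ha : 0 < a) (hb : 0 < b) :
    ∫ x in (0:ℝ)..1, x ^ (a - 1) * (1 - x) ^ (b - 1)
      = Real.Gamma a * Real.Gamma b / Real.Gamma (a + b) := by
  have key := Complex.Gamma_mul_Gamma_eq_betaIntegral (s := a) (t := b) (by simpa) (by simpa)
  have hI : Complex.betaIntegral a b
      = ((∫ x in (0:ℝ)..1, x ^ (a - 1) * (1 - x) ^ (b - 1) : ℝ) : ℂ) := by
    rw [Complex.betaIntegral, ← intervalIntegral.integral_ofReal]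
    apply intervalIntegral.integral_congr
    intro x hx
    rw [Set.uIcc_of_le (by norm_num : (0:ℝ) ≤ 1)] at hx
    push_cast
    rw [Complex.ofReal_cpow hx.1, Complex.ofReal_cpow (by linarith [hx.2] : (0:ℝ) ≤ 1 - x)]
    push_cast
    ring
  rw [hI] at key
  have hG : Real.Gamma (a + b) ≠ 0 := (Real.Gamma_pos_of_pos (by linarith)).ne'
  have : ((Real.Gamma a * Real.Gamma b : ℝ) : ℂ)
      = ((Real.Gamma (a+b) * ∫ x in (0:ℝ)..1, x ^ (a - 1) * (1 - x) ^ (b - 1) : ℝ) : ℂ) := by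
    push_cast
    rw [← Complex.Gamma_ofReal, ← Complex.Gamma_ofReal, ← Complex.Gamma_ofReal] at *
    push_cast at key ⊢
    rw [key]
  have := Complex.ofReal_inj.mp this
  field_simp
  linarith [this]

lemma J_val {t p η : ℝ} (ht : 0 < t) (hp : 0 ≤ p) (hη : 0 < η) :
    ∫ s in (0:ℝ)..t, (t - s) ^ p * s ^ (η - 1)
      = t ^ (p + η) * (Real.Gamma η * Real.Gamma (p+1) / Real.Gamma (η + p + 1)) := by
  have hbeta : ∫ x in (0:ℝ)..1, x ^ (η - 1) * (1 - x) ^ ((p+1) - 1)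
      = Real.Gamma η * Real.Gamma (p+1) / Real.Gamma (η + (p+1)) :=
    real_beta hη (by linarith)
  have h1 : (∫ x in (0:ℝ)..1, (t - t * x) ^ p * (t * x) ^ (η - 1))
      = t⁻¹ • ∫ s in (0:ℝ)..t, (t - s) ^ p * s ^ (η - 1) := by
    have := intervalIntegral.integral_comp_mul_left
      (f := fun s => (t - s) ^ p * s ^ (η - 1)) (a := 0) (b := 1) (c := t) ht.ne'
    simpa using this
  have h2 : (∫ x in (0:ℝ)..1, (t - t * x) ^ p * (t * x) ^ (η - 1))
      = t ^ p * t ^ (η - 1) * ∫ x in (0:ℝ)..1, x ^ (η - 1) * (1 - x) ^ ((p+1) - 1) := by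
    rw [← intervalIntegral.integral_const_mul]
    apply intervalIntegral.integral_congr
    intro x hx
    rw [Set.uIcc_of_le (by norm_num : (0:ℝ) ≤ 1)] at hx
    have h1x : (0:ℝ) ≤ 1 - x := by linarith [hx.2]
    have : t - t * x = t * (1 - x) := by ring
    simp only []
    rw [this, Real.mul_rpow ht.le h1x, Real.mul_rpow ht.le hx.1]
    ring_nf
  rw [eq_comm, inv_smul_eq_iff₀ ht.ne'] at h1
  rw [h1, h2, hbeta, smul_eq_mul]
  rw [show η + (p + 1) = (η + p) + 1 from by ring]
  have ht' : t ^ (p + η) = t * (t ^ p * t ^ (η-1)) := by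
    rw [← Real.rpow_add ht, ← Real.rpow_one_add' ht.le (by intro hc; linarith)]
    ring_nf
  rw [ht']
  ring

/-- If `k(t) ≤ C t^{η-1}` on `(0,1)`, the iterated convolutions `h_n` satisfy
`h_n(t) ≤ (C Γ(η))^{n-1} t^{(n-1)η} h₁(t) / Γ((n-1)η+1)` for `n ≥ 1` on `(0,1)`. -/
theorem hn_via_h1 (k : ℝ → ℝ) (C η : ℝ) (hC : 0 < C) (hη : η ∈ Set.Ioo (0:ℝ) 1)
    (hkm : Measurable k) (hk0 : ∀ t > 0, 0 ≤ k t)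
    (hkb : ∀ t ∈ Set.Ioo (0:ℝ) 1, k t ≤ C * t ^ (η - 1))
    (h : ℕ → ℝ → ℝ) (h0 : ∀ t, h 0 t = 1)
    (hrec : ∀ n t, h (n+1) t = ∫ s in (0:ℝ)..t, h n (t - s) * k s) :
    ∀ n : ℕ, ∀ t ∈ Set.Ioo (0:ℝ) 1,
      h (n+1) t ≤
        (C * Real.Gamma η) ^ n * t ^ ((n:ℝ) * η) * h 1 t / Real.Gamma ((n:ℝ) * η + 1) := by
  obtain ⟨hη0, hη1⟩ := hη
  have Gη : 0 < Real.Gamma η := Real.Gamma_pos_of_pos hη0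
  -- the majorant `s ↦ s^(η-1)` is integrable on `(0,t)`
  have maj_int : ∀ {t : ℝ}, 0 < t →
      IntegrableOn (fun s : ℝ => s ^ (η - 1)) (Set.Ioc 0 t) := by
    intro t ht
    have := intervalIntegral.intervalIntegrable_rpow' (a := 0) (b := t)
      (r := η - 1) (by linarith)
    rwa [intervalIntegrable_iff_integrableOn_Ioc_of_le ht.le] at this
  -- k is integrable on (0,t) for t < 1
  have kInt : ∀ {t : ℝ}, 0 < t → t < 1 → IntegrableOn k (Set.Ioc 0 t) := by
    intro t ht ht1
    refine ((maj_int ht).const_mul C).mono' (hkm.aestronglyMeasurable.restrict) ?_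
    rw [ae_restrict_iff' measurableSet_Ioc]
    filter_upwards with s hs
    rw [Real.norm_of_nonneg (hk0 s hs.1)]
    exact hkb s ⟨hs.1, lt_of_le_of_lt hs.2 ht1⟩
  -- description of h 1
  have h1eq : ∀ t : ℝ, h 1 t = ∫ s in (0:ℝ)..t, k s := by
    intro t
    rw [hrec]
    apply intervalIntegral.integral_congr
    intro s _
    simp [h0]
  have h1nn : ∀ {t : ℝ}, 0 ≤ t → 0 ≤ h 1 t := by
    intro t ht
    rw [h1eq, intervalIntegral.integral_of_le ht]
    exact setIntegral_nonneg measurableSet_Ioc (fun s hs => hk0 s hs.1)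
  have h1mono : ∀ {u t : ℝ}, 0 ≤ u → u ≤ t → t < 1 → h 1 u ≤ h 1 t := by
    intro u t hu hut ht1
    rcases eq_or_lt_of_le (hu.trans hut) with ht0 | ht0
    · have hu0 : u = 0 := le_antisymm (hut.trans ht0.symm.le) hu
      rw [hu0, ← ht0]
    rw [h1eq, h1eq, intervalIntegral.integral_of_le hu,
      intervalIntegral.integral_of_le (hu.trans hut)]
    refine setIntegral_mono_set (kInt ht0 ht1) ?_
      (HasSubset.Subset.eventuallyLE (Set.Ioc_subset_Ioc_right hut))
    rw [Filter.EventuallyLE, ae_restrict_iff' measurableSet_Ioc]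
    filter_upwards with s hs using hk0 s hs.1
  -- nonnegativity of all h n on [0,1)
  have h_at0 : ∀ n, 0 ≤ h n 0 := by
    intro n
    cases n with
    | zero => simp [h0]
    | succ m => rw [hrec]; simp
  have hnn : ∀ n, ∀ {u : ℝ}, 0 ≤ u → u < 1 → 0 ≤ h n u := by
    intro n
    induction n with
    | zero => intro u _ _; simp [h0]
    | succ m ih =>
      intro u hu hu1
      rcases eq_or_lt_of_le hu with hu0 | hu0
      · rw [← hu0]; exact h_at0 _
      rw [hrec, intervalIntegral.integral_of_le hu]
      refine setIntegral_nonneg measurableSet_Ioc (fun s hs => ?_)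
      refine mul_nonneg (ih (by linarith [hs.2]) (by linarith [hs.1, hs.2])) (hk0 s hs.1)
  -- the main induction
  intro n
  induction n with
  | zero =>
    intro t ht
    have : ((0:ℕ):ℝ) * η = 0 := by norm_num
    rw [this]
    simp [Real.Gamma_one]
  | succ n ih =>
    intro t ht
    obtain ⟨ht0, ht1⟩ := ht
    set p : ℝ := (n:ℝ) * η with hpdef
    have hp : 0 ≤ p := mul_nonneg (Nat.cast_nonneg n) hη0.le
    have G1 : 0 < Real.Gamma (p + 1) := Real.Gamma_pos_of_pos (by linarith)
    have G2 : 0 < Real.Gamma (η + p + 1) := Real.Gamma_pos_of_pos (by linarith)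
    have ha : 0 ≤ (C * Real.Gamma η) ^ n := by positivity
    have h1t : 0 ≤ h 1 t := h1nn ht0.le
    set K0 : ℝ := (C * Real.Gamma η) ^ n * h 1 t * C / Real.Gamma (p + 1) with hK0def
    have hK0 : 0 ≤ K0 := by
      apply div_nonneg _ G1.le
      exact mul_nonneg (mul_nonneg ha h1t) hC.le
    have hf2 : IntegrableOn (fun s : ℝ => (t - s) ^ p * s ^ (η - 1)) (Set.Ioc 0 t) := by
      refine ((maj_int ht0).const_mul (t ^ p)).mono' ?_ ?_
      · exact (((measurable_const.sub measurable_id).pow_const p).mul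
          (measurable_id.pow_const (η - 1))).aestronglyMeasurable.restrict
      · rw [ae_restrict_iff' measurableSet_Ioc]
        filter_upwards with s hs
        have h1 : (0:ℝ) ≤ t - s := by linarith [hs.2]
        have h2 : (0:ℝ) ≤ s ^ (η - 1) := Real.rpow_nonneg hs.1.le _
        rw [Real.norm_of_nonneg (mul_nonneg (Real.rpow_nonneg h1 _) h2)]
        exact mul_le_mul_of_nonneg_right
          (Real.rpow_le_rpow h1 (by linarith [hs.1]) hp) h2
    have hg_int : Integrable (fun s : ℝ => K0 * ((t - s) ^ p * s ^ (η - 1)))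
        (volume.restrict (Set.Ioc 0 t)) := hf2.const_mul K0
    have key : h (n + 1 + 1) t
        ≤ ∫ s in Set.Ioc 0 t, K0 * ((t - s) ^ p * s ^ (η - 1)) := by
      rw [hrec, intervalIntegral.integral_of_le ht0.le]
      refine integral_mono_of_nonneg ?_ hg_int ?_
      · rw [Filter.EventuallyLE, ae_restrict_iff' measurableSet_Ioc]
        filter_upwards with s hs
        exact mul_nonneg (hnn _ (by linarith [hs.2]) (by linarith [hs.1])) (hk0 s hs.1)
      · rw [Filter.EventuallyLE, ae_restrict_iff' measurableSet_Ioc]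
        filter_upwards with s hs
        rcases eq_or_lt_of_le hs.2 with hst | hst
        · -- s = t : left factor is h (n+1) 0 ... times k t; h(n+1)(t-s) with t-s = 0
          have : t - s = 0 := by rw [hst]; ring
          rw [this]
          have hh0 : h (n + 1) 0 = 0 := by rw [hrec]; simp
          rw [hh0, zero_mul]
          exact mul_nonneg hK0 (mul_nonneg (Real.rpow_nonneg le_rfl _)
            (Real.rpow_nonneg hs.1.le _))
        · have hts : t - s ∈ Set.Ioo (0:ℝ) 1 := ⟨by linarith, by linarith [hs.1]⟩
          have hb : (0:ℝ) ≤ (t - s) ^ p := Real.rpow_nonneg (by linarith) _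
          calc h (n + 1) (t - s) * k s
              ≤ ((C * Real.Gamma η) ^ n * (t - s) ^ p * h 1 (t - s)
                  / Real.Gamma (p + 1)) * k s := by
                apply mul_le_mul_of_nonneg_right _ (hk0 s hs.1)
                simpa [hpdef] using ih (t - s) hts
            _ ≤ ((C * Real.Gamma η) ^ n * (t - s) ^ p * h 1 t
                  / Real.Gamma (p + 1)) * k s := by
                apply mul_le_mul_of_nonneg_right _ (hk0 s hs.1)
                rw [div_le_div_iff_of_pos_right G1]
                exact mul_le_mul_of_nonneg_left
                  (h1mono hts.1.le (by linarith [hs.1]) ht1) (mul_nonneg ha hb)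
            _ ≤ ((C * Real.Gamma η) ^ n * (t - s) ^ p * h 1 t
                  / Real.Gamma (p + 1)) * (C * s ^ (η - 1)) := by
                apply mul_le_mul_of_nonneg_left
                  (hkb s ⟨hs.1, by linarith⟩)
                exact div_nonneg (mul_nonneg (mul_nonneg ha hb) h1t) G1.le
            _ = K0 * ((t - s) ^ p * s ^ (η - 1)) := by rw [hK0def]; ring
    have Jv : ∫ s in Set.Ioc 0 t, (t - s) ^ p * s ^ (η - 1)
        = t ^ (p + η) * (Real.Gamma η * Real.Gamma (p + 1) / Real.Gamma (η + p + 1)) := by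
      rw [← intervalIntegral.integral_of_le ht0.le]
      exact J_val ht0 hp hη0
    rw [MeasureTheory.integral_const_mul, Jv] at key
    refine key.trans (le_of_eq ?_)
    have hcast : ((n + 1 : ℕ) : ℝ) * η = p + η := by push_cast [hpdef]; ring
    rw [hcast, show p + η + 1 = η + p + 1 from by ring]
    rw [hK0def]
    field_simp
    ring
end

section
/- Let 0 < α < η < 1, set δ := η - α, and let C_n = Γ(η)^n ∏_{j=0}^{n-1} Γ(1-α+jδ)/Γ(1-α+η+jδ). Then C_n ≤ (Γ(η)/δ^η)^n (n!)^{-η} for every n ≥ 1. In particular, for every γ, t > 0 the series Σ_{n≥0} γ^n C_n t^{nδ} converges. -/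
/-- Gautschi-type inequality from log-convexity of Γ. -/
lemma gautschi_aux {x s : ℝ} (hx : 0 < x) (hs0 : 0 < s) (hs1 : s < 1) :
    Real.Gamma (x + s) / Real.Gamma (x + 1) ≤ x ^ (s - 1) := by
  have hx1 : (0:ℝ) < x + 1 := by linarith
  have hxs : (0:ℝ) < x + s := by linarith
  have hA : 0 < Real.Gamma x := Real.Gamma_pos_of_pos hx
  have hB : 0 < Real.Gamma (x + 1) := Real.Gamma_pos_of_pos hx1
  have hS : 0 < Real.Gamma (x + s) := Real.Gamma_pos_of_pos hxs
  have hconv := Real.convexOn_log_Gamma.2 (Set.mem_Ioi.mpr hx) (Set.mem_Ioi.mpr hx1)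
    (by linarith : (0:ℝ) ≤ 1 - s) hs0.le (by ring)
  simp only [smul_eq_mul, Function.comp_apply] at hconv
  have harg : (1 - s) * x + s * (x + 1) = x + s := by ring
  rw [harg] at hconv
  -- exponentiate
  have hGam : Real.Gamma (x + s) ≤ Real.Gamma x ^ (1 - s) * Real.Gamma (x + 1) ^ s := by
    have h := Real.exp_le_exp.mpr hconv
    have e1 : Real.exp ((1 - s) * Real.log (Real.Gamma x)) = Real.Gamma x ^ (1 - s) := by
      rw [Real.rpow_def_of_pos hA, mul_comm]
    have e2 : Real.exp (s * Real.log (Real.Gamma (x + 1))) = Real.Gamma (x + 1) ^ s := by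
      rw [Real.rpow_def_of_pos hB, mul_comm]
    rwa [Real.exp_log hS, Real.exp_add, e1, e2] at h
  have hrw : Real.Gamma x ^ (1 - s) * Real.Gamma (x + 1) ^ (s - 1) = x ^ (s - 1) := by
    rw [Real.Gamma_add_one hx.ne', Real.mul_rpow hx.le hA.le,
      show Real.Gamma x ^ (1 - s) * (x ^ (s - 1) * Real.Gamma x ^ (s - 1))
        = x ^ (s - 1) * (Real.Gamma x ^ (1 - s) * Real.Gamma x ^ (s - 1)) from by ring,
      ← Real.rpow_add hA, show (1 - s) + (s - 1) = 0 from by ring, Real.rpow_zero, mul_one]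
  rw [← hrw, div_le_iff₀ hB]
  calc Real.Gamma (x + s) ≤ Real.Gamma x ^ (1 - s) * Real.Gamma (x + 1) ^ s := hGam
    _ = Real.Gamma x ^ (1 - s) * Real.Gamma (x + 1) ^ (s - 1) * Real.Gamma (x + 1) := by
        rw [mul_assoc, ← Real.rpow_add_one hB.ne' (s-1)]; ring_nf

/-- The Gamma-product constants `C_n` satisfy `C_n ≤ (Γ(η)/δ^η)^n (n!)^{-η}` for
`0 < α < η < 1`, `δ = η - α`; consequently `Σ γ^n C_n t^{nδ}` converges. -/
theorem Cn_bound_and_summable (α η δ : ℝ) (hα : 0 < α) (hαη : α < η) (hη : η < 1)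
    (hδ : δ = η - α) (C : ℕ → ℝ)
    (hC : ∀ n : ℕ, C n = Real.Gamma η ^ n *
      ∏ j ∈ Finset.range n,
        Real.Gamma (1 - α + (j:ℝ) * δ) / Real.Gamma (1 - α + η + (j:ℝ) * δ)) :
    (∀ n : ℕ, 1 ≤ n → C n ≤ (Real.Gamma η / δ ^ η) ^ n * ((n.factorial : ℝ)) ^ (-η)) ∧
    (∀ γ t : ℝ, 0 < γ → 0 < t →
      Summable (fun n : ℕ => γ ^ n * C n * t ^ ((n:ℝ) * δ))) := by
  have hδ0 : 0 < δ := by rw [hδ]; linarith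
  have hη0 : 0 < η := lt_trans hα hαη
  have hGη : 0 < Real.Gamma η := Real.Gamma_pos_of_pos hη0
  have hδη : (0:ℝ) < δ ^ η := Real.rpow_pos_of_pos hδ0 η
  -- per-factor positivity and bound
  have hpos1 : ∀ j : ℕ, (0:ℝ) < 1 - α + (j:ℝ) * δ := by
    intro j
    have : (0:ℝ) ≤ (j:ℝ) * δ := mul_nonneg (Nat.cast_nonneg j) hδ0.le
    linarith
  have hpos2 : ∀ j : ℕ, (0:ℝ) < 1 - α + η + (j:ℝ) * δ := by
    intro j; have := hpos1 j; linarith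
  have hfac : ∀ j : ℕ,
      Real.Gamma (1 - α + (j:ℝ) * δ) / Real.Gamma (1 - α + η + (j:ℝ) * δ)
        ≤ (((j:ℝ) + 1) * δ) ^ (-η) := by
    intro j
    have hx : (0:ℝ) < ((j:ℝ) + 1) * δ :=
      mul_pos (by positivity) hδ0
    have := gautschi_aux (x := ((j:ℝ) + 1) * δ) (s := 1 - η) hx (by linarith) (by linarith)
    have e1 : ((j:ℝ) + 1) * δ + (1 - η) = 1 - α + (j:ℝ) * δ := by rw [hδ]; ring
    have e2 : ((j:ℝ) + 1) * δ + 1 = 1 - α + η + (j:ℝ) * δ := by rw [hδ]; ring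
    have e3 : (1 - η) - 1 = -η := by ring
    rwa [e1, e2, e3] at this
  have hp2 : ∀ m : ℕ, (∏ j ∈ Finset.range m, ((j:ℝ) + 1) * δ) = (m.factorial : ℝ) * δ ^ m := by
    intro m
    induction m with
    | zero => simp
    | succ m ih =>
      rw [Finset.prod_range_succ, ih, Nat.factorial_succ, pow_succ]
      push_cast; ring
  -- the key bound, valid for all n
  have key : ∀ n : ℕ, C n ≤ (Real.Gamma η / δ ^ η) ^ n * ((n.factorial : ℝ)) ^ (-η) := by
    intro n
    rw [hC n]
    have hprod : (∏ j ∈ Finset.range n,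
        Real.Gamma (1 - α + (j:ℝ) * δ) / Real.Gamma (1 - α + η + (j:ℝ) * δ))
        ≤ ∏ j ∈ Finset.range n, (((j:ℝ) + 1) * δ) ^ (-η) := by
      apply Finset.prod_le_prod
      · intro j _
        exact div_nonneg (Real.Gamma_pos_of_pos (hpos1 j)).le
          (Real.Gamma_pos_of_pos (hpos2 j)).le
      · intro j _; exact hfac j
    have hstep : Real.Gamma η ^ n *
        (∏ j ∈ Finset.range n,
          Real.Gamma (1 - α + (j:ℝ) * δ) / Real.Gamma (1 - α + η + (j:ℝ) * δ))
        ≤ Real.Gamma η ^ n * ∏ j ∈ Finset.range n, (((j:ℝ) + 1) * δ) ^ (-η) :=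
      mul_le_mul_of_nonneg_left hprod (pow_nonneg hGη.le n)
    refine hstep.trans (le_of_eq ?_)
    have hp1 : ∏ j ∈ Finset.range n, (((j:ℝ) + 1) * δ) ^ (-η)
        = ((∏ j ∈ Finset.range n, ((j:ℝ) + 1) * δ)) ^ (-η) := by
      rw [← Real.finset_prod_rpow _ _ (fun j _ => (mul_pos (by positivity) hδ0).le)]
    rw [hp1, hp2 n, Real.mul_rpow (by positivity) (by positivity)]
    have hp3 : (δ ^ n : ℝ) ^ (-η) = ((δ ^ η)⁻¹ : ℝ) ^ n := by
      rw [← Real.rpow_natCast δ n, ← Real.rpow_natCast ((δ ^ η)⁻¹) n,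
        ← Real.rpow_neg hδ0.le, ← Real.rpow_mul hδ0.le, ← Real.rpow_mul hδ0.le]
      ring_nf
    rw [hp3, div_eq_mul_inv, mul_pow]
    ring
  refine ⟨fun n _ => key n, fun γ t hγ ht => ?_⟩
  -- comparison with c^n (n!)^{-η}
  set c : ℝ := γ * (Real.Gamma η / δ ^ η) * t ^ δ with hc
  have hc0 : 0 < c := by
    apply mul_pos (mul_pos hγ (div_pos hGη hδη)) (Real.rpow_pos_of_pos ht δ)
  have hCnn : ∀ n, 0 ≤ C n := by
    intro n
    rw [hC n]
    apply mul_nonneg (pow_nonneg hGη.le n)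
    exact Finset.prod_nonneg fun j _ =>
      div_nonneg (Real.Gamma_pos_of_pos (hpos1 j)).le (Real.Gamma_pos_of_pos (hpos2 j)).le
  have ht' : ∀ n : ℕ, t ^ ((n:ℝ) * δ) = (t ^ δ) ^ n := by
    intro n
    rw [mul_comm, Real.rpow_mul ht.le, Real.rpow_natCast]
  -- Summability of majorant via ratio test
  have hg : Summable (fun n : ℕ => c ^ n * ((n.factorial : ℝ)) ^ (-η)) := by
    have hgpos : ∀ n : ℕ, (0:ℝ) < c ^ n * ((n.factorial : ℝ)) ^ (-η) := by
      intro n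
      exact mul_pos (pow_pos hc0 n)
        (Real.rpow_pos_of_pos (by exact_mod_cast n.factorial_pos) (-η))
    apply summable_of_ratio_test_tendsto_lt_one (l := 0) one_pos
      (Filter.Eventually.of_forall fun n => (hgpos n).ne')
    have hratio : ∀ n : ℕ,
        ‖c ^ (n + 1) * (((n+1).factorial : ℝ)) ^ (-η)‖ / ‖c ^ n * ((n.factorial : ℝ)) ^ (-η)‖
        = c * ((n:ℝ) + 1) ^ (-η) := by
      intro n
      rw [Real.norm_of_nonneg (hgpos (n+1)).le, Real.norm_of_nonneg (hgpos n).le]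
      have hfe : (((n+1).factorial : ℝ)) = ((n:ℝ) + 1) * (n.factorial : ℝ) := by
        rw [Nat.factorial_succ]; push_cast; ring
      rw [hfe, Real.mul_rpow (by positivity) (by positivity), pow_succ]
      have h1 : (0:ℝ) < (n.factorial : ℝ) ^ (-η) :=
        Real.rpow_pos_of_pos (by exact_mod_cast n.factorial_pos) (-η)
      field_simp
    have : Filter.Tendsto (fun n : ℕ => c * ((n:ℝ) + 1) ^ (-η)) Filter.atTop (nhds 0) := by
      have h1 : Filter.Tendsto (fun n : ℕ => ((n:ℝ) + 1)) Filter.atTop Filter.atTop :=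
        Filter.tendsto_atTop_add_const_right _ 1 tendsto_natCast_atTop_atTop
      have h2 := (tendsto_rpow_neg_atTop hη0).comp h1
      have h3 := h2.const_mul c
      simpa using h3
    exact this.congr fun n => (hratio n).symm
  -- compare
  refine Summable.of_nonneg_of_le (fun n => ?_) (fun n => ?_) hg
  · exact mul_nonneg (mul_nonneg (pow_pos hγ n).le (hCnn n)) (Real.rpow_pos_of_pos ht _).le
  · have h1 : γ ^ n * C n * t ^ ((n:ℝ) * δ)
        ≤ γ ^ n * ((Real.Gamma η / δ ^ η) ^ n * ((n.factorial : ℝ)) ^ (-η)) * (t ^ δ) ^ n := by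
      rw [ht' n]
      apply mul_le_mul_of_nonneg_right _ (pow_nonneg (Real.rpow_pos_of_pos ht δ).le n)
      exact mul_le_mul_of_nonneg_left (key n) (pow_nonneg hγ.le n)
    refine h1.trans (le_of_eq ?_)
    rw [hc, mul_pow, mul_pow]
    ring
end

section
/- For all t > s' > s > 0 and x ∈ ℝ: if s' ∈ [s, (t+s)/2], then ∫_s^{s'} exp(-(t-r)(r-s) x² / (t-s)) dr ≤ 2 (1 - e^{-x²(s'-s)/2}) / x²; and if s' ∈ ((t+s)/2, t], then ∫_s^{s'} exp(-(t-r)(r-s) x² / (t-s)) dr ≤ 2 (1 - 2 e^{-x²(t-s)/4} + e^{-x²(t-s')/2}) / x². -/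
/-!
On `[s, t]` the bridge exponent satisfies `(t - r)(r - s)/(t - s) ≥ min (t - r) (r - s) / 2`:
on the left half of the interval `t - r ≥ (t - s)/2`, on the right half `r - s ≥ (t - s)/2`.
So on the left half the integrand is at most `exp (-x²(r - s)/2)` and on the right half at most
`exp (-x²(t - r)/2)`, and both majorants integrate in closed form. For `s'` beyond the midpoint,
the integral is split there.
-/

open MeasureTheory intervalIntegral Real

lemma integral_exp_neg_mul_sub {c : ℝ} (hc : c ≠ 0) (u a b : ℝ) :
    ∫ r in a..b, exp (-c * (r - u)) = (exp (-c * (a - u)) - exp (-c * (b - u))) / c := by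
  have hderiv (r : ℝ) : HasDerivAt (fun r => -exp (-c * (r - u)) / c) (exp (-c * (r - u))) r := by
    refine ((((hasDerivAt_id r).sub_const u).const_mul (-c)).exp.neg.div_const c).congr_deriv ?_
    field_simp
    simp
  rw [integral_eq_sub_of_hasDerivAt (fun r _ => hderiv r)
    ((by fun_prop : Continuous fun r => exp (-c * (r - u))).intervalIntegrable a b)]
  ring

lemma integral_exp_neg_mul_sub_left {c : ℝ} (hc : c ≠ 0) (u a b : ℝ) :
    ∫ r in a..b, exp (-c * (u - r)) = (exp (-c * (u - b)) - exp (-c * (u - a))) / c := by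
  have hc' : -c ≠ 0 := neg_ne_zero.mpr hc
  simp_rw [show ∀ r, -c * (u - r) = - -c * (r - u) by intro r; ring, integral_exp_neg_mul_sub hc']
  rw [div_neg, ← neg_div, neg_sub]

lemma half_sub_left_le_bridge_exponent {s t r : ℝ} (hst : s < t) (hsr : s ≤ r)
    (hr : r ≤ (t + s) / 2) :
    (r - s) / 2 ≤ (t - r) * (r - s) / (t - s) := by
  rw [le_div_iff₀ (sub_pos.mpr hst)]
  nlinarith

lemma half_sub_right_le_bridge_exponent {s t r : ℝ} (hst : s < t) (hr : (t + s) / 2 ≤ r)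
    (hrt : r ≤ t) :
    (t - r) / 2 ≤ (t - r) * (r - s) / (t - s) := by
  rw [le_div_iff₀ (sub_pos.mpr hst)]
  nlinarith

lemma exp_bridge_le {s t r a : ℝ} (x : ℝ) (h : a / 2 ≤ (t - r) * (r - s) / (t - s)) :
    exp (-((t - r) * (r - s) * x ^ 2) / (t - s)) ≤ exp (-(x ^ 2 / 2) * a) := by
  have := mul_le_mul_of_nonneg_left h (sq_nonneg x)
  gcongr
  linarith [show -((t - r) * (r - s) * x ^ 2) / (t - s) = -(x ^ 2 * ((t - r) * (r - s) / (t - s)))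
    by ring]

lemma integral_exp_mono_on {f g : ℝ → ℝ} {a b : ℝ} (hf : Continuous f) (hg : Continuous g)
    (hab : a ≤ b) (hfg : ∀ r ∈ Set.Icc a b, exp (f r) ≤ exp (g r)) :
    ∫ r in a..b, exp (f r) ≤ ∫ r in a..b, exp (g r) :=
  integral_mono_on hab ((continuous_exp.comp hf).intervalIntegrable a b)
    ((continuous_exp.comp hg).intervalIntegrable a b) hfg

theorem bridge_integral_bound_general (t s' s x : ℝ) (hss' : s < s') (hs't : s' < t)
    (hx : x ≠ 0) :
    (s' ≤ (t + s) / 2 →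
      (∫ r in s..s', Real.exp (-((t - r) * (r - s) * x^2) / (t - s))) ≤
        2 * (1 - Real.exp (-(x^2 / 2) * (s' - s))) / x^2) ∧
    ((t + s) / 2 < s' →
      (∫ r in s..s', Real.exp (-((t - r) * (r - s) * x^2) / (t - s))) ≤
        2 * (1 - 2 * Real.exp (-(x^2 / 4) * (t - s)) + Real.exp (-(x^2 / 2) * (t - s'))) / x^2) := by
  have hst : s < t := hss'.trans hs't
  have hc : x ^ 2 / 2 ≠ 0 := by positivity
  have hbridge : Continuous fun r => -((t - r) * (r - s) * x ^ 2) / (t - s) := by fun_prop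
  constructor
  · intro hs'm
    calc _ ≤ ∫ r in s..s', exp (-(x ^ 2 / 2) * (r - s)) :=
          integral_exp_mono_on hbridge (by fun_prop) hss'.le fun r hr =>
            exp_bridge_le x (half_sub_left_le_bridge_exponent hst hr.1 (hr.2.trans hs'm))
      _ = _ := by
          rw [integral_exp_neg_mul_sub hc, sub_self, mul_zero, exp_zero]
          field_simp
  · intro hms'
    set m := (t + s) / 2
    have hsm : s ≤ m := by simp only [m]; linarith
    have hint (a b : ℝ) : IntervalIntegrable (fun r => exp (-((t - r) * (r - s) * x ^ 2) / (t - s)))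
        volume a b := (continuous_exp.comp hbridge).intervalIntegrable a b
    rw [← integral_add_adjacent_intervals (hint s m) (hint m s')]
    calc _ ≤ (∫ r in s..m, exp (-(x ^ 2 / 2) * (r - s))) +
            ∫ r in m..s', exp (-(x ^ 2 / 2) * (t - r)) := by
          gcongr ?_ + ?_
          · exact integral_exp_mono_on hbridge (by fun_prop) hsm fun r hr =>
              exp_bridge_le x (half_sub_left_le_bridge_exponent hst hr.1 hr.2)
          · exact integral_exp_mono_on hbridge (by fun_prop) hms'.le fun r hr =>
              exp_bridge_le x (half_sub_right_le_bridge_exponent hst hr.1 (hr.2.trans hs't.le))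
      _ = _ := by
          rw [integral_exp_neg_mul_sub hc, integral_exp_neg_mul_sub_left hc, sub_self, mul_zero,
            exp_zero, show -(x ^ 2 / 2) * (m - s) = -(x ^ 2 / 4) * (t - s) by ring,
            show -(x ^ 2 / 2) * (t - m) = -(x ^ 2 / 4) * (t - s) by ring]
          field_simp
          ring

/-- Two-case bound for the Brownian-bridge exponential integral
`∫_s^{s'} exp(-(t-r)(r-s)x²/(t-s)) dr`. -/
theorem bridge_integral_bound (t s' s x : ℝ) (hs : 0 < s) (hss' : s < s') (hs't : s' < t)
    (hx : x ≠ 0) :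
    (s' ≤ (t + s) / 2 →
      (∫ r in s..s', Real.exp (-((t - r) * (r - s) * x^2) / (t - s))) ≤
        2 * (1 - Real.exp (-(x^2 / 2) * (s' - s))) / x^2) ∧
    ((t + s) / 2 < s' →
      (∫ r in s..s', Real.exp (-((t - r) * (r - s) * x^2) / (t - s))) ≤
        2 * (1 - 2 * Real.exp (-(x^2 / 4) * (t - s)) + Real.exp (-(x^2 / 2) * (t - s'))) / x^2) :=
  bridge_integral_bound_general t s' s x hss' hs't hx
end

section
/- For every η ∈ (0,1], there exists C_η > 0 such that for all t ≥ s' > s ≥ 0 and all x ∈ ℝ, ∫_s^{s'} exp(-(t-r)(r-s) x² / (t-s)) dr ≤ C_η e^{(t-s)/4} (s'-s)^η (1 + x²)^{-(1-η)}. -/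
open MeasureTheory intervalIntegral

private lemma int_exp_affine (c d a b : ℝ) (hc : c ≠ 0) :
    ∫ r in a..b, Real.exp (c * r + d) =
      (Real.exp (c * b + d) - Real.exp (c * a + d)) / c := by
  have h : ∀ r ∈ Set.uIcc a b,
      HasDerivAt (fun u => Real.exp (c * u + d) / c) (Real.exp (c * r + d)) r := by
    intro r _
    have h1 : HasDerivAt (fun u : ℝ => c * u + d) c r := by
      simpa using ((hasDerivAt_id r).const_mul c).add_const d
    have h2 := (h1.exp).div_const c
    simpa [mul_div_assoc, div_self hc] using h2
  have hint : IntervalIntegrable (fun r => Real.exp (c * r + d)) volume a b :=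
    (by continuity : Continuous fun r => Real.exp (c * r + d)).intervalIntegrable a b
  have := intervalIntegral.integral_eq_sub_of_hasDerivAt h hint
  rw [this]
  ring

private lemma exp_int_bound1 (c a b : ℝ) (hc : 0 < c) (hab : a ≤ b) :
    ∫ r in a..b, Real.exp (-(c * (r - a))) ≤ 1 / c := by
  have hrw : ∀ r : ℝ, -(c * (r - a)) = (-c) * r + c * a := fun r => by ring
  simp only [hrw]
  rw [int_exp_affine (-c) (c * a) a b (by linarith)]
  have h1 : Real.exp (-c * b + c * a) ≤ 1 := by
    rw [Real.exp_le_one_iff]; nlinarith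
  have h2 : Real.exp (-c * a + c * a) = 1 := by
    rw [show -c * a + c * a = 0 by ring, Real.exp_zero]
  rw [h2, div_neg, ← neg_div, neg_sub, div_le_div_iff₀ hc hc]
  nlinarith [Real.exp_pos (-c * b + c * a)]

private lemma exp_int_bound2 (c a b t : ℝ) (hc : 0 < c) (hab : a ≤ b) (hbt : b ≤ t) :
    ∫ r in a..b, Real.exp (-(c * (t - r))) ≤ 1 / c := by
  have hrw : ∀ r : ℝ, -(c * (t - r)) = c * r + (-(c * t)) := fun r => by ring
  simp only [hrw]
  rw [int_exp_affine c (-(c * t)) a b (ne_of_gt hc)]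
  have h1 : Real.exp (c * b + -(c * t)) ≤ 1 := by
    rw [Real.exp_le_one_iff]; nlinarith
  have h2 : 0 < Real.exp (c * a + -(c * t)) := Real.exp_pos _
  rw [div_le_div_iff₀ hc hc]
  nlinarith

private lemma half_bound (y a b c : ℝ) (hy : 0 < y) (ha : 0 ≤ a) (hc : 0 < c)
    (h : c ≤ 2 * b) : y / 2 * a ≤ b * a / c * y := by
  rw [div_mul_eq_mul_div (b * a) c y, le_div_iff₀ hc]
  nlinarith [mul_le_mul_of_nonneg_left h (mul_nonneg hy.le ha)]

set_option maxHeartbeats 1000000 in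
/-- For every `η ∈ (0,1]` there is `C_η > 0` with
`∫_s^{s'} exp(-(t-r)(r-s)x²/(t-s)) dr ≤ C_η e^{(t-s)/4} (s'-s)^η (1+x²)^{-(1-η)}`. -/
theorem bridge_integral_bound_eta (η : ℝ) (hη : η ∈ Set.Ioc (0:ℝ) 1) :
    ∃ C : ℝ, 0 < C ∧ ∀ t s' s x : ℝ, 0 ≤ s → s < s' → s' ≤ t →
      (∫ r in s..s', Real.exp (-((t - r) * (r - s) * x^2) / (t - s))) ≤
        C * Real.exp ((t - s) / 4) * (s' - s) ^ η * (1 + x^2) ^ (-(1 - η)) := by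
  obtain ⟨hη0, hη1⟩ := hη
  refine ⟨4, by norm_num, fun t s' s x hs hss' hs't => ?_⟩
  set y : ℝ := 1 + x ^ 2 with hy_def
  have hy1 : (1 : ℝ) ≤ y := by nlinarith [sq_nonneg x]
  have hy0 : (0 : ℝ) < y := by linarith
  have hts : 0 < t - s := by linarith
  have hd0 : 0 < s' - s := by linarith
  set E : ℝ := Real.exp ((t - s) / 4) with hE_def
  have hE1 : (1 : ℝ) ≤ E := Real.one_le_exp (by linarith)
  have hE0 : (0 : ℝ) < E := by linarith
  set I : ℝ := ∫ r in s..s', Real.exp (-((t - r) * (r - s) * x ^ 2) / (t - s)) with hI_def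
  have hcont : Continuous fun r : ℝ => Real.exp (-((t - r) * (r - s) * x ^ 2) / (t - s)) := by
    continuity
  -- Bound A : I ≤ s' - s
  have hIA : I ≤ s' - s := by
    have hmono : I ≤ ∫ _r in s..s', (1 : ℝ) := by
      apply intervalIntegral.integral_mono_on (le_of_lt hss')
        (hcont.intervalIntegrable s s') intervalIntegrable_const
      intro r hr
      rw [Real.exp_le_one_iff]
      have h1 : 0 ≤ t - r := by linarith [hr.2]
      have h2 : 0 ≤ r - s := by linarith [hr.1]
      have hnum : 0 ≤ (t - r) * (r - s) * x ^ 2 := by positivity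
      have hq : 0 ≤ (t - r) * (r - s) * x ^ 2 / (t - s) := by positivity
      rw [neg_div]
      linarith
    simpa using hmono
  -- Bound B : I ≤ E * (4 / y)
  have hIB : I ≤ E * (4 / y) := by
    have hc1 : Continuous fun r : ℝ => Real.exp (-(y / 2 * (r - s))) := by continuity
    have hc2 : Continuous fun r : ℝ => Real.exp (-(y / 2 * (t - r))) := by continuity
    have hptwise : ∀ r ∈ Set.Icc s s',
        Real.exp (-((t - r) * (r - s) * x ^ 2) / (t - s)) ≤
          E * (Real.exp (-(y / 2 * (r - s))) + Real.exp (-(y / 2 * (t - r)))) := by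
      intro r hr
      have hrs : 0 ≤ r - s := by linarith [hr.1]
      have hrt : 0 ≤ t - r := by linarith [hr.2]
      set A : ℝ := (t - r) * (r - s) / (t - s) with hA_def
      have hA0 : 0 ≤ A := by positivity
      have hA4 : A ≤ (t - s) / 4 := by
        rw [hA_def, div_le_div_iff₀ hts (by norm_num : (0:ℝ) < 4)]
        nlinarith [sq_nonneg ((t - r) - (r - s))]
      have hsplit : -((t - r) * (r - s) * x ^ 2) / (t - s) = A + -(A * y) := by
        rw [hA_def, hy_def]; field_simp; ring
      rw [hsplit, Real.exp_add]
      have hexpA : Real.exp A ≤ E := Real.exp_le_exp.2 hA4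
      have hkey : Real.exp (-(A * y)) ≤
          Real.exp (-(y / 2 * (r - s))) + Real.exp (-(y / 2 * (t - r))) := by
        rcases le_total (r - s) (t - r) with h | h
        · have hle : y / 2 * (r - s) ≤ A * y := by
            rw [hA_def]
            exact half_bound y (r - s) (t - r) (t - s) hy0 hrs hts (by linarith)
          have := Real.exp_le_exp.2 (neg_le_neg hle)
          linarith [Real.exp_pos (-(y / 2 * (t - r)))]
        · have hle : y / 2 * (t - r) ≤ A * y := by
            rw [hA_def, mul_comm (t - r) (r - s)]
            exact half_bound y (t - r) (r - s) (t - s) hy0 hrt hts (by linarith)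
          have := Real.exp_le_exp.2 (neg_le_neg hle)
          linarith [Real.exp_pos (-(y / 2 * (r - s)))]
      have h1 : 0 ≤ Real.exp (-(A * y)) := (Real.exp_pos _).le
      exact mul_le_mul hexpA hkey h1 hE0.le
    have hmono : I ≤ ∫ r in s..s',
        E * (Real.exp (-(y / 2 * (r - s))) + Real.exp (-(y / 2 * (t - r)))) := by
      apply intervalIntegral.integral_mono_on (le_of_lt hss')
        (hcont.intervalIntegrable s s')
        ((continuous_const.mul (hc1.add hc2)).intervalIntegrable s s')
      exact hptwise
    have hy2 : (0 : ℝ) < y / 2 := by linarith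
    have hb1 : (∫ r in s..s', Real.exp (-(y / 2 * (r - s)))) ≤ 2 / y := by
      have h := exp_int_bound1 (y / 2) s s' hy2 hss'.le
      have heq : (1 : ℝ) / (y / 2) = 2 / y := by
        rw [one_div_div]
      rw [heq] at h
      exact h
    have hb2 : (∫ r in s..s', Real.exp (-(y / 2 * (t - r)))) ≤ 2 / y := by
      have h := exp_int_bound2 (y / 2) s s' t hy2 hss'.le hs't
      have heq : (1 : ℝ) / (y / 2) = 2 / y := by
        rw [one_div_div]
      rw [heq] at h
      exact h
    calc I ≤ ∫ r in s..s',
        E * (Real.exp (-(y / 2 * (r - s))) + Real.exp (-(y / 2 * (t - r)))) := hmono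
      _ = E * ((∫ r in s..s', Real.exp (-(y / 2 * (r - s)))) +
          (∫ r in s..s', Real.exp (-(y / 2 * (t - r))))) := by
          rw [intervalIntegral.integral_const_mul,
            intervalIntegral.integral_add (hc1.intervalIntegrable s s')
              (hc2.intervalIntegrable s s')]
      _ ≤ E * (2 / y + 2 / y) := by
          apply mul_le_mul_of_nonneg_left _ hE0.le
          linarith
      _ = E * (4 / y) := by ring
  -- combine
  set d : ℝ := s' - s with hd_def
  have hηpow : (0 : ℝ) < d ^ η := Real.rpow_pos_of_pos hd0 η
  have hypow : (0 : ℝ) < y ^ (-(1 - η)) := Real.rpow_pos_of_pos hy0 _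
  rcases le_total (d * y) 1 with hc | hc
  · -- d ≤ 1/y case
    have hd1y : d ≤ 1 / y := by
      rw [le_div_iff₀ hy0]; linarith
    have hsplit : d = d ^ η * d ^ (1 - η) := by
      rw [← Real.rpow_add hd0]
      norm_num
    have hle : d ^ (1 - η) ≤ y ^ (-(1 - η)) := by
      have h1 : d ^ (1 - η) ≤ (1 / y) ^ (1 - η) :=
        Real.rpow_le_rpow hd0.le hd1y (by linarith)
      have h2 : (1 / y) ^ (1 - η) = y ^ (-(1 - η)) := by
        rw [one_div, Real.inv_rpow hy0.le, ← Real.rpow_neg hy0.le]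
      rw [h2] at h1
      exact h1
    have h4E : (1 : ℝ) ≤ 4 * E := by linarith
    calc I ≤ d := hIA
      _ = d ^ η * d ^ (1 - η) := hsplit
      _ ≤ d ^ η * y ^ (-(1 - η)) := by
          exact mul_le_mul_of_nonneg_left hle hηpow.le
      _ ≤ 4 * E * (d ^ η * y ^ (-(1 - η))) :=
          le_mul_of_one_le_left (by positivity) h4E
      _ = 4 * E * d ^ η * y ^ (-(1 - η)) := by ring
  · -- 1/y ≤ d case
    have hyd : 1 / y ≤ d := by
      rw [div_le_iff₀ hy0]; linarith
    have hkey : 1 / y ≤ d ^ η * y ^ (-(1 - η)) := by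
      have h1 : (1 / y) ^ η ≤ d ^ η :=
        Real.rpow_le_rpow (by positivity) hyd hη0.le
      have h2 : (1 / y) ^ η * y ^ (-(1 - η)) = 1 / y := by
        rw [one_div, Real.inv_rpow hy0.le, ← Real.rpow_neg hy0.le, ← Real.rpow_add hy0,
          show -η + -(1 - η) = -1 by ring, Real.rpow_neg_one]
      calc 1 / y = (1 / y) ^ η * y ^ (-(1 - η)) := h2.symm
        _ ≤ d ^ η * y ^ (-(1 - η)) := mul_le_mul_of_nonneg_right h1 hypow.le
    calc I ≤ E * (4 / y) := hIB
      _ = 4 * E * (1 / y) := by ring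
      _ ≤ 4 * E * (d ^ η * y ^ (-(1 - η))) := by
          apply mul_le_mul_of_nonneg_left hkey (by positivity)
      _ = 4 * E * d ^ η * y ^ (-(1 - η)) := by ring
end

section
/- Let g : [0,T] → ℝ be monotone and β > 0. Then ∫₀^t g(t-s) exp(-2β s(t-s)/t) ds = ∫₀^t g(s) exp(-2β s(t-s)/t) ds for all t ∈ (0,T], and this quantity is bounded above by 2 ∫₀^t g(s) e^{-β(t-s)} ds if g is nondecreasing and nonnegative, and by 2 ∫₀^t g(s) e^{-β s} ds if g is nonincreasing and nonnegative. -/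
open MeasureTheory intervalIntegral

/-- Change-of-variables identity and bounds for monotone `g` against the kernel
`exp(-2βs(t-s)/t)` on `[0,t]`. -/
theorem monotone_kernel_bounds (g : ℝ → ℝ) (T β : ℝ) (hT : 0 < T) (hβ : 0 < β)
    (t : ℝ) (ht : t ∈ Set.Ioc (0:ℝ) T)
    (hg : MonotoneOn g (Set.Icc 0 T) ∨ AntitoneOn g (Set.Icc 0 T)) :
    ((∫ s in (0:ℝ)..t, g (t - s) * Real.exp (-(2 * β * s * (t - s)) / t)) =
      ∫ s in (0:ℝ)..t, g s * Real.exp (-(2 * β * s * (t - s)) / t)) ∧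
    ((∀ s ∈ Set.Icc (0:ℝ) T, 0 ≤ g s) → MonotoneOn g (Set.Icc 0 T) →
      (∫ s in (0:ℝ)..t, g s * Real.exp (-(2 * β * s * (t - s)) / t)) ≤
        2 * ∫ s in (0:ℝ)..t, g s * Real.exp (-β * (t - s))) ∧
    ((∀ s ∈ Set.Icc (0:ℝ) T, 0 ≤ g s) → AntitoneOn g (Set.Icc 0 T) →
      (∫ s in (0:ℝ)..t, g s * Real.exp (-(2 * β * s * (t - s)) / t)) ≤
        2 * ∫ s in (0:ℝ)..t, g s * Real.exp (-β * s)) := by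
  obtain ⟨ht0, htT⟩ := ht
  have hKcont : Continuous fun s : ℝ => Real.exp (-(2 * β * s * (t - s)) / t) :=
    Real.continuous_exp.comp
      ((by continuity : Continuous fun s : ℝ => -(2 * β * s * (t - s))).div_const t)
  have hE1cont : Continuous fun s : ℝ => Real.exp (-β * (t - s)) := by continuity
  have hE2cont : Continuous fun s : ℝ => Real.exp (-β * s) := by continuity
  have ht2 : t / 2 ∈ Set.Icc (0:ℝ) T := ⟨by linarith, by linarith⟩
  have h0T : (0:ℝ) ∈ Set.Icc (0:ℝ) T := ⟨le_refl 0, hT.le⟩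
  have htT' : t ∈ Set.Icc (0:ℝ) T := ⟨ht0.le, htT⟩
  -- kernel pointwise bounds
  have hK1 : ∀ s ∈ Set.Icc (0:ℝ) (t/2),
      Real.exp (-(2 * β * s * (t - s)) / t) ≤ Real.exp (-β * s) := by
    intro s hs
    apply Real.exp_le_exp.mpr
    rw [div_le_iff₀ ht0]
    nlinarith [mul_nonneg (mul_nonneg hβ.le hs.1) (by linarith [hs.2] : (0:ℝ) ≤ t - 2 * s)]
  have hK2 : ∀ s ∈ Set.Icc (t/2) t,
      Real.exp (-(2 * β * s * (t - s)) / t) ≤ Real.exp (-β * (t - s)) := by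
    intro s hs
    apply Real.exp_le_exp.mpr
    rw [div_le_iff₀ ht0]
    nlinarith [mul_nonneg (mul_nonneg hβ.le (by linarith [hs.2] : (0:ℝ) ≤ t - s))
      (by linarith [hs.1] : (0:ℝ) ≤ 2 * s - t)]
  refine ⟨?_, ?_, ?_⟩
  · -- change of variables s ↦ t - s
    have h := intervalIntegral.integral_comp_sub_left (a := 0) (b := t)
      (fun u => g u * Real.exp (-(2 * β * u * (t - u)) / t)) t
    simp only [sub_zero, sub_self] at h
    rw [← h]
    apply intervalIntegral.integral_congr
    intro s _
    show g (t - s) * Real.exp (-(2 * β * s * (t - s)) / t)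
      = g (t - s) * Real.exp (-(2 * β * (t - s) * (t - (t - s))) / t)
    congr 2
    ring
  · -- monotone case
    intro hg0 hmono
    have hgi : ∀ a b, a ∈ Set.Icc (0:ℝ) T → b ∈ Set.Icc (0:ℝ) T →
        IntervalIntegrable g volume a b := fun a b ha hb =>
      (hmono.mono (Set.uIcc_subset_Icc ha hb)).intervalIntegrable
    have hiK1 : IntervalIntegrable (fun s => g s * Real.exp (-(2 * β * s * (t - s)) / t))
        volume 0 (t/2) := (hgi 0 (t/2) h0T ht2).mul_continuousOn hKcont.continuousOn
    have hiK2 : IntervalIntegrable (fun s => g s * Real.exp (-(2 * β * s * (t - s)) / t))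
        volume (t/2) t := (hgi (t/2) t ht2 htT').mul_continuousOn hKcont.continuousOn
    have hiE1a : IntervalIntegrable (fun s => g s * Real.exp (-β * (t - s))) volume 0 (t/2) :=
      (hgi 0 (t/2) h0T ht2).mul_continuousOn hE1cont.continuousOn
    have hiE1b : IntervalIntegrable (fun s => g s * Real.exp (-β * (t - s))) volume (t/2) t :=
      (hgi (t/2) t ht2 htT').mul_continuousOn hE1cont.continuousOn
    have hiE2a : IntervalIntegrable (fun s => g s * Real.exp (-β * s)) volume 0 (t/2) :=
      (hgi 0 (t/2) h0T ht2).mul_continuousOn hE2cont.continuousOn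
    -- the reflected function
    have hanti : AntitoneOn (fun x => g (t - x)) (Set.uIcc (t/2) t) := by
      intro x hx y hy hxy
      rw [Set.uIcc_of_le (by linarith)] at hx hy
      exact hmono ⟨by linarith [hy.2], by linarith [hy.1]⟩
        ⟨by linarith [hx.2], by linarith [hx.1]⟩ (by linarith)
    have hiR : IntervalIntegrable (fun x => g (t - x) * Real.exp (-β * (t - x)))
        volume (t/2) t := hanti.intervalIntegrable.mul_continuousOn hE1cont.continuousOn
    have hsplit := intervalIntegral.integral_add_adjacent_intervals hiK1 hiK2
    have hb1 : (∫ s in (0:ℝ)..(t/2), g s * Real.exp (-(2 * β * s * (t - s)) / t)) ≤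
        ∫ s in (0:ℝ)..(t/2), g s * Real.exp (-β * s) := by
      apply intervalIntegral.integral_mono_on (by linarith) hiK1 hiE2a
      intro s hs
      exact mul_le_mul_of_nonneg_left (hK1 s hs) (hg0 s ⟨hs.1, by linarith [hs.2]⟩)
    have hb2 : (∫ s in (t/2)..t, g s * Real.exp (-(2 * β * s * (t - s)) / t)) ≤
        ∫ s in (t/2)..t, g s * Real.exp (-β * (t - s)) := by
      apply intervalIntegral.integral_mono_on (by linarith) hiK2 hiE1b
      intro s hs
      exact mul_le_mul_of_nonneg_left (hK2 s hs) (hg0 s ⟨by linarith [hs.1], by linarith [hs.2]⟩)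
    have hcov : (∫ s in (0:ℝ)..(t/2), g s * Real.exp (-β * s)) =
        ∫ x in (t/2)..t, g (t - x) * Real.exp (-β * (t - x)) := by
      have h := intervalIntegral.integral_comp_sub_left (a := t/2) (b := t)
        (fun u => g u * Real.exp (-β * u)) t
      simp only [sub_self] at h
      rw [show t - t/2 = t/2 by ring] at h
      exact h.symm
    have hb3 : (∫ x in (t/2)..t, g (t - x) * Real.exp (-β * (t - x))) ≤
        ∫ x in (t/2)..t, g x * Real.exp (-β * (t - x)) := by
      apply intervalIntegral.integral_mono_on (by linarith) hiR hiE1b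
      intro x hx
      exact mul_le_mul_of_nonneg_right
        (hmono ⟨by linarith [hx.2], by linarith [hx.1]⟩
          ⟨by linarith [hx.1], by linarith [hx.2]⟩ (by linarith [hx.1]))
        (Real.exp_pos _).le
    have hsplitE := intervalIntegral.integral_add_adjacent_intervals hiE1a hiE1b
    have hnn : 0 ≤ ∫ s in (0:ℝ)..(t/2), g s * Real.exp (-β * (t - s)) :=
      intervalIntegral.integral_nonneg (by linarith)
        (fun s hs => mul_nonneg (hg0 s ⟨hs.1, by linarith [hs.2]⟩) (Real.exp_pos _).le)
    linarith
  · -- antitone case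
    intro hg0 hanti
    have hgi : ∀ a b, a ∈ Set.Icc (0:ℝ) T → b ∈ Set.Icc (0:ℝ) T →
        IntervalIntegrable g volume a b := fun a b ha hb =>
      (hanti.mono (Set.uIcc_subset_Icc ha hb)).intervalIntegrable
    have hiK1 : IntervalIntegrable (fun s => g s * Real.exp (-(2 * β * s * (t - s)) / t))
        volume 0 (t/2) := (hgi 0 (t/2) h0T ht2).mul_continuousOn hKcont.continuousOn
    have hiK2 : IntervalIntegrable (fun s => g s * Real.exp (-(2 * β * s * (t - s)) / t))
        volume (t/2) t := (hgi (t/2) t ht2 htT').mul_continuousOn hKcont.continuousOn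
    have hiE2a : IntervalIntegrable (fun s => g s * Real.exp (-β * s)) volume 0 (t/2) :=
      (hgi 0 (t/2) h0T ht2).mul_continuousOn hE2cont.continuousOn
    have hiE2b : IntervalIntegrable (fun s => g s * Real.exp (-β * s)) volume (t/2) t :=
      (hgi (t/2) t ht2 htT').mul_continuousOn hE2cont.continuousOn
    have hiE1b : IntervalIntegrable (fun s => g s * Real.exp (-β * (t - s))) volume (t/2) t :=
      (hgi (t/2) t ht2 htT').mul_continuousOn hE1cont.continuousOn
    -- the reflected function on [0, t/2]
    have hmonoR : MonotoneOn (fun x => g (t - x)) (Set.uIcc 0 (t/2)) := by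
      intro x hx y hy hxy
      rw [Set.uIcc_of_le (by linarith)] at hx hy
      exact hanti ⟨by linarith [hy.2], by linarith [hy.1]⟩
        ⟨by linarith [hx.2], by linarith [hx.1]⟩ (by linarith)
    have hiR : IntervalIntegrable (fun x => g (t - x) * Real.exp (-β * x))
        volume 0 (t/2) := hmonoR.intervalIntegrable.mul_continuousOn hE2cont.continuousOn
    have hsplit := intervalIntegral.integral_add_adjacent_intervals hiK1 hiK2
    have hb1 : (∫ s in (0:ℝ)..(t/2), g s * Real.exp (-(2 * β * s * (t - s)) / t)) ≤
        ∫ s in (0:ℝ)..(t/2), g s * Real.exp (-β * s) := by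
      apply intervalIntegral.integral_mono_on (by linarith) hiK1 hiE2a
      intro s hs
      exact mul_le_mul_of_nonneg_left (hK1 s hs) (hg0 s ⟨hs.1, by linarith [hs.2]⟩)
    have hb2 : (∫ s in (t/2)..t, g s * Real.exp (-(2 * β * s * (t - s)) / t)) ≤
        ∫ s in (t/2)..t, g s * Real.exp (-β * (t - s)) := by
      apply intervalIntegral.integral_mono_on (by linarith) hiK2 hiE1b
      intro s hs
      exact mul_le_mul_of_nonneg_left (hK2 s hs) (hg0 s ⟨by linarith [hs.1], by linarith [hs.2]⟩)
    have hcov : (∫ s in (t/2)..t, g s * Real.exp (-β * (t - s))) =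
        ∫ x in (0:ℝ)..(t/2), g (t - x) * Real.exp (-β * x) := by
      have h := intervalIntegral.integral_comp_sub_left (a := 0) (b := t/2)
        (fun u => g u * Real.exp (-β * (t - u))) t
      simp only [sub_zero] at h
      rw [show t - t/2 = t/2 by ring] at h
      rw [← h]
      apply intervalIntegral.integral_congr
      intro x _
      show g (t - x) * Real.exp (-β * (t - (t - x))) = g (t - x) * Real.exp (-β * x)
      congr 2
      ring
    have hb3 : (∫ x in (0:ℝ)..(t/2), g (t - x) * Real.exp (-β * x)) ≤
        ∫ x in (0:ℝ)..(t/2), g x * Real.exp (-β * x) := by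
      apply intervalIntegral.integral_mono_on (by linarith) hiR hiE2a
      intro x hx
      exact mul_le_mul_of_nonneg_right
        (hanti ⟨hx.1, by linarith [hx.2]⟩
          ⟨by linarith [hx.2], by linarith [hx.1]⟩ (by linarith [hx.2]))
        (Real.exp_pos _).le
    have hsplitE := intervalIntegral.integral_add_adjacent_intervals hiE2a hiE2b
    have hnn : 0 ≤ ∫ s in (t/2)..t, g s * Real.exp (-β * s) :=
      intervalIntegral.integral_nonneg (by linarith)
        (fun s hs => mul_nonneg (hg0 s ⟨by linarith [hs.1], by linarith [hs.2]⟩)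
          (Real.exp_pos _).le)
    linarith
end

section
/- Let (Z_n) be a sequence of centered real Gaussian random variables with Var(Z_n) = a(n) > 0, let (Y_n) be centered square-integrable random variables with Var(Y_n) = b(n), and set X_n := Z_n + Y_n. If b(n)/a(n) → 0 as n → ∞, then liminf_{n→∞} (1/a(n)) E[X_n² · 1_{(-∞,0)}(X_n)] ≥ 1/2. -/
/-!
Write `x⁻ = max (-x) 0`, so that `x² 1_{x<0} = (x⁻)²`. As `x ↦ x⁻` is 1-Lipschitz,
`|Z⁻ - X⁻| ≤ |Y|`, and absorbing the cross term by AM-GM gives `(1 - ε) (Z⁻)² ≤ (X⁻)² + Y²/ε`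
pointwise. By symmetry of the centred Gaussian, `E[(Z_n⁻)²] = a(n)/2`, hence
`E[(X_n⁻)²]/a(n) ≥ (1 - ε)/2 - (b(n)/a(n))/ε`, whose liminf is `(1 - ε)/2` for every `ε > 0`.
The same inequality with `Z` and `X` exchanged bounds the sequence above, which is needed for
its (real-valued) liminf to be meaningful.
-/

open MeasureTheory Filter ProbabilityTheory
open scoped NNReal ENNReal Topology

lemma sq_mul_indicator_Iio_zero (x : ℝ) :
    x ^ 2 * Set.indicator (Set.Iio 0) (fun _ => (1 : ℝ)) x = max (-x) 0 ^ 2 := by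
  rcases lt_or_ge x 0 with hx | hx
  · simp [hx, max_eq_left (neg_nonneg.2 hx.le)]
  · simp [not_lt.2 hx, hx]

lemma max_neg_zero_sq_add_max_zero_sq (x : ℝ) : max (-x) 0 ^ 2 + max x 0 ^ 2 = x ^ 2 := by
  rcases le_total x 0 with hx | hx <;> simp [hx]

lemma one_sub_mul_sq_le_sq_add_sq_div {u v w ε : ℝ} (h : |u - v| ≤ w) (hε : 0 < ε) :
    (1 - ε) * u ^ 2 ≤ v ^ 2 + w ^ 2 / ε := by
  have hcross : 2 * |u| * w ≤ ε * u ^ 2 + w ^ 2 / ε := by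
    have : ε * u ^ 2 + w ^ 2 / ε - 2 * |u| * w = (ε * |u| - w) ^ 2 / ε := by
      rw [← sq_abs u]
      field_simp
      ring
    linarith [div_nonneg (sq_nonneg (ε * |u| - w)) hε.le]
  have hdiff : u ^ 2 - v ^ 2 ≤ 2 * |u| * w := by
    have : u * (u - v) ≤ |u| * w := by
      calc u * (u - v) ≤ |u * (u - v)| := le_abs_self _
        _ = |u| * |u - v| := abs_mul _ _
        _ ≤ |u| * w := by gcongr
    nlinarith [sq_nonneg (u - v)]
  linarith

lemma integral_max_neg_zero_sq_of_map_neg_eq {μ : Measure ℝ} (hμ : μ.map (fun x => -x) = μ)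
    (h : MemLp (fun x => x) 2 μ) :
    ∫ x, max (-x) 0 ^ 2 ∂μ = (∫ x, x ^ 2 ∂μ) / 2 := by
  have hsymm : ∫ x, max (-x) 0 ^ 2 ∂μ = ∫ x, max x 0 ^ 2 ∂μ := by
    conv_rhs => rw [← hμ]
    rw [integral_map (by fun_prop) (by fun_prop)]
  have hsum : ∫ x, max (-x) 0 ^ 2 ∂μ + ∫ x, max x 0 ^ 2 ∂μ = ∫ x, x ^ 2 ∂μ := by
    rw [← integral_add h.neg_part.integrable_sq h.pos_part.integrable_sq]
    simp_rw [max_neg_zero_sq_add_max_zero_sq]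
  linarith

lemma integral_max_neg_zero_sq_gaussianReal (v : ℝ≥0) :
    ∫ x, max (-x) 0 ^ 2 ∂gaussianReal 0 v = v / 2 := by
  have h := memLp_id_gaussianReal' (μ := 0) (v := v) 2 (by simp)
  have hsq : ∫ x, x ^ 2 ∂gaussianReal 0 v = v := by
    simpa using (variance_eq_sub h).symm
  rw [integral_max_neg_zero_sq_of_map_neg_eq (by rw [gaussianReal_map_neg, neg_zero]) h, hsq]

section

variable {Ω : Type*} [MeasurableSpace Ω] {P : Measure Ω}

lemma hasLaw_of_map_eq_gaussianReal {Z : Ω → ℝ} {μ : ℝ} {v : ℝ≥0}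
    (hZ : P.map Z = gaussianReal μ v) : HasLaw Z (gaussianReal μ v) P :=
  ⟨.of_map_ne_zero (hZ ▸ IsProbabilityMeasure.ne_zero _), hZ⟩

lemma ProbabilityTheory.HasLaw.memLp_of_gaussianReal {Z : Ω → ℝ} {μ : ℝ} {v : ℝ≥0}
    (hZ : HasLaw Z (gaussianReal μ v) P) {p : ℝ≥0∞} (hp : p ≠ ⊤) : MemLp Z p P := by
  have h := memLp_id_gaussianReal' (μ := μ) (v := v) p hp
  rw [← hZ.map_eq] at h
  exact (memLp_map_measure_iff aestronglyMeasurable_id hZ.aemeasurable).1 h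

lemma ProbabilityTheory.HasLaw.integral_max_neg_zero_sq_gaussianReal {Z : Ω → ℝ} {v : ℝ≥0}
    (hZ : HasLaw Z (gaussianReal 0 v) P) : ∫ ω, max (-Z ω) 0 ^ 2 ∂P = v / 2 :=
  (hZ.integral_comp (f := fun x => max (-x) 0 ^ 2) (by fun_prop)).trans
    (_root_.integral_max_neg_zero_sq_gaussianReal v)

lemma one_sub_mul_integral_max_neg_zero_sq_le {U W : Ω → ℝ} (hU : MemLp U 2 P)
    (hW : MemLp W 2 P) {ε : ℝ} (hε : 0 < ε) :
    (1 - ε) * ∫ ω, max (-U ω) 0 ^ 2 ∂P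
      ≤ ∫ ω, max (-(U ω + W ω)) 0 ^ 2 ∂P + (∫ ω, W ω ^ 2 ∂P) / ε := by
  have hV : Integrable (fun ω => max (-(U ω + W ω)) 0 ^ 2) P :=
    (hU.add hW).neg_part.integrable_sq
  have hW' : Integrable (fun ω => W ω ^ 2 / ε) P := hW.integrable_sq.div_const ε
  rw [← integral_const_mul, ← integral_div, ← integral_add hV hW']
  refine integral_mono (hU.neg_part.integrable_sq.const_mul _) (hV.add hW') fun ω => ?_
  have hlip : |max (-U ω) 0 - max (-(U ω + W ω)) 0| ≤ |W ω| :=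
    (abs_max_sub_max_le_abs _ _ _).trans (by rw [neg_sub_neg, add_sub_cancel_left])
  simpa [sq_abs] using one_sub_mul_sq_le_sq_add_sq_div hlip hε

lemma ProbabilityTheory.HasLaw.one_sub_mul_le_integral_max_neg_zero_sq_add {Z Y : Ω → ℝ}
    {v : ℝ≥0} (hZ : HasLaw Z (gaussianReal 0 v) P) (hY : MemLp Y 2 P) {ε : ℝ} (hε : 0 < ε) :
    (1 - ε) * (v / 2) ≤ ∫ ω, max (-(Z ω + Y ω)) 0 ^ 2 ∂P + (∫ ω, Y ω ^ 2 ∂P) / ε := by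
  rw [← hZ.integral_max_neg_zero_sq_gaussianReal]
  exact one_sub_mul_integral_max_neg_zero_sq_le (hZ.memLp_of_gaussianReal (by simp)) hY hε

lemma ProbabilityTheory.HasLaw.integral_max_neg_zero_sq_add_le {Z Y : Ω → ℝ} {v : ℝ≥0}
    (hZ : HasLaw Z (gaussianReal 0 v) P) (hY : MemLp Y 2 P) :
    ∫ ω, max (-(Z ω + Y ω)) 0 ^ 2 ∂P ≤ v + 4 * ∫ ω, Y ω ^ 2 ∂P := by
  have h := one_sub_mul_integral_max_neg_zero_sq_le
    ((hZ.memLp_of_gaussianReal (by simp)).add hY) hY.neg (by norm_num : (0 : ℝ) < 1 / 2)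
  simp only [Pi.add_apply, Pi.neg_apply, add_neg_cancel_right, neg_sq] at h
  rw [hZ.integral_max_neg_zero_sq_gaussianReal] at h
  linarith

end

lemma le_liminf_of_one_sub_mul_sub_div_le {ι : Type*} {l : Filter ι} [l.NeBot] {f r : ι → ℝ}
    {c : ℝ} (hr : Tendsto r l (𝓝 0)) (hf : IsCoboundedUnder (· ≥ ·) l f)
    (h : ∀ ε > 0, ∀ i, (1 - ε) * c - r i / ε ≤ f i) : c ≤ liminf f l := by
  have hlim : Tendsto (fun ε : ℝ => (1 - ε) * c) (𝓝[>] 0) (𝓝 c) := by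
    have : Continuous fun ε : ℝ => (1 - ε) * c := by fun_prop
    simpa using (this.tendsto 0).mono_left nhdsWithin_le_nhds
  refine le_of_tendsto hlim (eventually_nhdsWithin_of_forall fun ε (hε : 0 < ε) => ?_)
  have hlow : Tendsto (fun i => (1 - ε) * c - r i / ε) l (𝓝 ((1 - ε) * c)) := by
    simpa using (hr.div_const ε).const_sub ((1 - ε) * c)
  calc (1 - ε) * c = liminf (fun i => (1 - ε) * c - r i / ε) l := hlow.liminf_eq.symm
    _ ≤ liminf f l := liminf_le_liminf (.of_forall (h ε hε)) hlow.isBoundedUnder_ge hf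

theorem gaussian_perturbation_general {Ω : Type*} [MeasurableSpace Ω] (P : Measure Ω)
    [IsProbabilityMeasure P] (Z Y : ℕ → Ω → ℝ) (a : ℕ → NNReal) (b : ℕ → ℝ)
    (hZ : ∀ n, P.map (Z n) = ProbabilityTheory.gaussianReal 0 (a n))
    (ha : ∀ n, 0 < a n)
    (hY : ∀ n, MemLp (Y n) 2 P)
    (hYv : ∀ n, ∫ ω, (Y n ω)^2 ∂P = b n)
    (hlim : Tendsto (fun n => b n / (a n : ℝ)) atTop (nhds 0)) :
    (1/2 : ℝ) ≤
      liminf (fun n => ((a n : ℝ))⁻¹ *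
        ∫ ω, (Z n ω + Y n ω)^2 *
          Set.indicator (Set.Iio (0:ℝ)) (fun _ => (1:ℝ)) (Z n ω + Y n ω) ∂P) atTop := by
  simp_rw [sq_mul_indicator_Iio_zero]
  have hZlaw n := hasLaw_of_map_eq_gaussianReal (hZ n)
  have ha' n : (a n : ℝ) ≠ 0 := (NNReal.coe_pos.2 (ha n)).ne'
  have hlower : ∀ ε > 0, ∀ n, (1 - ε) * (1 / 2) - b n / a n / ε
      ≤ (a n : ℝ)⁻¹ * ∫ ω, max (-(Z n ω + Y n ω)) 0 ^ 2 ∂P := by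
    intro ε hε n
    have h := (hZlaw n).one_sub_mul_le_integral_max_neg_zero_sq_add (hY n) hε
    rw [hYv n] at h
    rw [show (1 - ε) * (1 / 2) - b n / a n / ε = (a n : ℝ)⁻¹ * ((1 - ε) * (a n / 2) - b n / ε) by
      field_simp [ha' n]]
    gcongr
    linarith
  have hupper n : (a n : ℝ)⁻¹ * ∫ ω, max (-(Z n ω + Y n ω)) 0 ^ 2 ∂P ≤ 1 + 4 * (b n / a n) := by
    rw [show 1 + 4 * (b n / a n) = (a n : ℝ)⁻¹ * (a n + 4 * b n) by field_simp [ha' n], ← hYv n]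
    gcongr
    exact (hZlaw n).integral_max_neg_zero_sq_add_le (hY n)
  refine le_liminf_of_one_sub_mul_sub_div_le hlim ?_ hlower
  refine isCoboundedUnder_ge_of_eventually_le atTop (x := 5) ?_
  filter_upwards [hlim.eventually (eventually_le_nhds one_pos)] with n hn
  linarith [hupper n]

/-- Gaussian perturbation lemma: if `X_n = Z_n + Y_n` with `Z_n ~ N(0, a(n))` and
`Y_n` centered with variance `b(n)`, and `b(n)/a(n) → 0`, then
`liminf (1/a(n)) E[X_n² 1_{X_n < 0}] ≥ 1/2`. -/
theorem gaussian_perturbation {Ω : Type*} [MeasurableSpace Ω] (P : Measure Ω)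
    [IsProbabilityMeasure P] (Z Y : ℕ → Ω → ℝ) (a : ℕ → NNReal) (b : ℕ → ℝ)
    (hZmeas : ∀ n, Measurable (Z n))
    (hZ : ∀ n, P.map (Z n) = ProbabilityTheory.gaussianReal 0 (a n))
    (ha : ∀ n, 0 < a n)
    (hY : ∀ n, MemLp (Y n) 2 P)
    (hYc : ∀ n, ∫ ω, Y n ω ∂P = 0)
    (hYv : ∀ n, ∫ ω, (Y n ω)^2 ∂P = b n)
    (hlim : Tendsto (fun n => b n / (a n : ℝ)) atTop (nhds 0)) :
    (1/2 : ℝ) ≤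
      liminf (fun n => ((a n : ℝ))⁻¹ *
        ∫ ω, (Z n ω + Y n ω)^2 *
          Set.indicator (Set.Iio (0:ℝ)) (fun _ => (1:ℝ)) (Z n ω + Y n ω) ∂P) atTop :=
  gaussian_perturbation_general P Z Y a b hZ ha hY hYv hlim
end
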